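/- Expected-value transfer under (ε, δ)-closeness: let Y be a measurable space, μ, ν probability measures on Y such that μ S ≤ exp ε * ν S + ENNReal.ofReal δ for every measurable set S (with ε, δ ≥ 0), and let f : Y → ℝ be measurable with 0 ≤ f y ≤ 1 for all y. Then ∫ f ∂μ ≤ exp ε * ∫ f ∂ν + δ. -/
import Mathlib


open MeasureTheory Set

/-- Expected-value transfer under `(ε, δ)`-closeness of probability measures:
if `μ S ≤ exp ε * ν S + δ` for every measurable `S` and `f` takes values in
`[0, 1]`, then `∫ f ∂μ ≤ exp ε * ∫ f ∂ν + δ`. -/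
theorem integral_le_of_dp_close
    {Y : Type*} [MeasurableSpace Y] (μ ν : Measure Y)
    [IsProbabilityMeasure μ] [IsProbabilityMeasure ν]
    (ε δ : ℝ) (hε : 0 ≤ ε) (hδ : 0 ≤ δ)
    (h : ∀ S : Set Y, MeasurableSet S →
      μ S ≤ ENNReal.ofReal (Real.exp ε) * ν S + ENNReal.ofReal δ)
    (f : Y → ℝ) (hf : Measurable f)
    (hf0 : ∀ y, 0 ≤ f y) (hf1 : ∀ y, f y ≤ 1) :
    ∫ y, f y ∂μ ≤ Real.exp ε * ∫ y, f y ∂ν + δ := by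
  set A := ∫⁻ y, ENNReal.ofReal (f y) ∂μ with hA
  set B := ∫⁻ y, ENNReal.ofReal (f y) ∂ν with hB
  have hB1 : B ≤ 1 := by
    calc B ≤ ∫⁻ _, 1 ∂ν := lintegral_mono fun y => by
            simpa using ENNReal.ofReal_le_ofReal (hf1 y)
      _ = 1 := by simp
  have hBfin : B ≠ ⊤ := (lt_of_le_of_lt hB1 ENNReal.one_lt_top).ne
  have key : A ≤ ENNReal.ofReal (Real.exp ε) * B + ENNReal.ofReal δ := by
    rw [hA, hB, lintegral_eq_lintegral_meas_lt μ (Filter.Eventually.of_forall hf0)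
        hf.aemeasurable, lintegral_eq_lintegral_meas_lt ν (Filter.Eventually.of_forall hf0)
        hf.aemeasurable]
    have hbound : ∀ t ∈ Ioi (0:ℝ), μ {a | t < f a} ≤
        ENNReal.ofReal (Real.exp ε) * ν {a | t < f a} +
          (Ioo (0:ℝ) 1).indicator (fun _ => ENNReal.ofReal δ) t := by
      intro t ht
      by_cases ht1 : t < 1
      · have : (Ioo (0:ℝ) 1).indicator (fun _ => ENNReal.ofReal δ) t = ENNReal.ofReal δ := by
          rw [Set.indicator_of_mem (Set.mem_Ioo.mpr ⟨ht, ht1⟩)]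
        rw [this]
        exact h _ (measurableSet_lt measurable_const hf)
      · have : {a | t < f a} = (∅ : Set Y) := by
          ext a; simp only [Set.mem_setOf_eq, Set.mem_empty_iff_false, iff_false, not_lt]
          exact (hf1 a).trans (not_lt.mp ht1)
        rw [this]
        simp
    have hνmeas : Measurable fun t : ℝ => ν {a | t < f a} :=
      Antitone.measurable (fun s t hst => measure_mono (fun a ha => lt_of_le_of_lt hst ha))
    calc ∫⁻ t in Ioi 0, μ {a | t < f a}
        ≤ ∫⁻ t in Ioi 0, (ENNReal.ofReal (Real.exp ε) * ν {a | t < f a} +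
            (Ioo (0:ℝ) 1).indicator (fun _ => ENNReal.ofReal δ) t) :=
          setLIntegral_mono_ae' measurableSet_Ioi (Filter.Eventually.of_forall hbound)
      _ = ENNReal.ofReal (Real.exp ε) * (∫⁻ t in Ioi 0, ν {a | t < f a}) +
            ∫⁻ t in Ioi 0, (Ioo (0:ℝ) 1).indicator (fun _ => ENNReal.ofReal δ) t := by
          rw [lintegral_add_right _ ((measurable_const.indicator measurableSet_Ioo)),
            lintegral_const_mul _ hνmeas]
      _ = ENNReal.ofReal (Real.exp ε) * (∫⁻ t in Ioi 0, ν {a | t < f a}) + ENNReal.ofReal δ := by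
          congr 1
          rw [lintegral_indicator measurableSet_Ioo, Measure.restrict_restrict measurableSet_Ioo]
          simp [Set.inter_eq_left.mpr Set.Ioo_subset_Ioi_self, Real.volume_Ioo]
  have hμ : ∫ y, f y ∂μ = A.toReal := by
    rw [hA, integral_eq_lintegral_of_nonneg_ae (Filter.Eventually.of_forall hf0)
      hf.aestronglyMeasurable]
  have hν : ∫ y, f y ∂ν = B.toReal := by
    rw [hB, integral_eq_lintegral_of_nonneg_ae (Filter.Eventually.of_forall hf0)
      hf.aestronglyMeasurable]
  rw [hμ, hν]
  have hrhs : (ENNReal.ofReal (Real.exp ε) * B + ENNReal.ofReal δ).toReal =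
      Real.exp ε * B.toReal + δ := by
    rw [ENNReal.toReal_add (ENNReal.mul_ne_top ENNReal.ofReal_ne_top hBfin) ENNReal.ofReal_ne_top,
      ENNReal.toReal_mul, ENNReal.toReal_ofReal (Real.exp_pos ε).le, ENNReal.toReal_ofReal hδ]
  calc A.toReal ≤ (ENNReal.ofReal (Real.exp ε) * B + ENNReal.ofReal δ).toReal :=
        ENNReal.toReal_mono (by
          exact ENNReal.add_ne_top.mpr ⟨ENNReal.mul_ne_top ENNReal.ofReal_ne_top hBfin,
            ENNReal.ofReal_ne_top⟩) key
    _ = Real.exp ε * B.toReal + δ := hrhs
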